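/- arXiv:2304.11639 — 6 statements merged into one kernel-verified Lean document; each statement's English description precedes it below -/
import Mathlib

section
/- Let J ≥ 1 be a natural number, m ∈ ℝ, Δ > 0, let s : Fin J → ℝ be arbitrary AP direction parameters, and let g : ℝ → Fin J be any assignment of points to APs. Let D = {t − s (g t) : t ∈ [m, m + Δ]} be the resulting set of angular offsets. Then sSup D − sInf D ≥ Δ/J. -/
/-- Lower-bound half of Proposition 3: no AP-subarea association can achieve
angular deviation less than `Δ / J`. -/
theorem stmt_2 (J : ℕ) (hJ : 1 ≤ J) (m Δ : ℝ) (hΔ : 0 < Δ)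
    (s : Fin J → ℝ) (g : ℝ → Fin J)
    (D : Set ℝ) (hD : D = {x : ℝ | ∃ t ∈ Set.Icc m (m + Δ), x = t - s (g t)}) :
    Δ / J ≤ sSup D - sInf D := by
  subst hD
  have hJ0 : (0:ℝ) < (J:ℝ) := by exact_mod_cast hJ
  have hne : (Fin J) → True := fun _ => trivial
  have hFinJ : Nonempty (Fin J) := ⟨⟨0, hJ⟩⟩
  -- bounds on D
  have hBddA : BddAbove {x : ℝ | ∃ t ∈ Set.Icc m (m + Δ), x = t - s (g t)} := by
    refine ⟨(m + Δ) - Finset.univ.inf' (Finset.univ_nonempty) s, ?_⟩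
    rintro x ⟨t, ⟨ht1, ht2⟩, rfl⟩
    have : Finset.univ.inf' (Finset.univ_nonempty) s ≤ s (g t) :=
      Finset.inf'_le _ (Finset.mem_univ _)
    linarith
  have hBddB : BddBelow {x : ℝ | ∃ t ∈ Set.Icc m (m + Δ), x = t - s (g t)} := by
    refine ⟨m - Finset.univ.sup' (Finset.univ_nonempty) s, ?_⟩
    rintro x ⟨t, ⟨ht1, ht2⟩, rfl⟩
    have : s (g t) ≤ Finset.univ.sup' (Finset.univ_nonempty) s :=
      Finset.le_sup' _ (Finset.mem_univ _)
    linarith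
  -- pigeonhole on J+1 points
  obtain ⟨i, -, i', -, hii, heq⟩ :=
    Finset.exists_ne_map_eq_of_card_lt_of_maps_to
      (s := (Finset.univ : Finset (Fin (J+1)))) (t := (Finset.univ : Finset (Fin J)))
      (by simp) (fun i _ => Finset.mem_univ (g (m + i * Δ / J)))
  wlog hlt : (i:ℕ) < (i':ℕ) generalizing i i'
  · exact this i' i hii.symm heq.symm (by omega)
  set t1 : ℝ := m + i * Δ / J with ht1def
  set t2 : ℝ := m + i' * Δ / J with ht2def
  have hmem : ∀ k : Fin (J+1), m + k * Δ / J ∈ Set.Icc m (m + Δ) := by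
    intro k
    have hk : (k:ℝ) ≤ J := by exact_mod_cast Nat.lt_succ_iff.mp k.isLt
    have hk0 : (0:ℝ) ≤ (k:ℝ) := Nat.cast_nonneg _
    have h1 : 0 ≤ (k:ℝ) * Δ / J := by positivity
    have h2 : (k:ℝ) * Δ / J ≤ Δ := by
      rw [div_le_iff₀ hJ0]; nlinarith
    constructor <;> linarith
  have hx1 : t1 - s (g t1) ∈ {x : ℝ | ∃ t ∈ Set.Icc m (m + Δ), x = t - s (g t)} :=
    ⟨t1, hmem i, rfl⟩
  have hx2 : t2 - s (g t2) ∈ {x : ℝ | ∃ t ∈ Set.Icc m (m + Δ), x = t - s (g t)} :=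
    ⟨t2, hmem i', rfl⟩
  have hsup : t2 - s (g t2) ≤ sSup {x : ℝ | ∃ t ∈ Set.Icc m (m + Δ), x = t - s (g t)} :=
    le_csSup hBddA hx2
  have hinf : sInf {x : ℝ | ∃ t ∈ Set.Icc m (m + Δ), x = t - s (g t)} ≤ t1 - s (g t1) :=
    csInf_le hBddB hx1
  have hgeq : s (g t1) = s (g t2) := by rw [heq]
  have hdiff : Δ / J ≤ t2 - t1 := by
    have h1 : (i:ℝ) + 1 ≤ (i':ℝ) := by exact_mod_cast hlt
    rw [ht1def, ht2def, div_le_iff₀ hJ0]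
    have : (i:ℝ) * Δ + Δ ≤ (i':ℝ) * Δ := by nlinarith
    field_simp
    nlinarith
  have hfin : t2 - s (g t2) - (t1 - s (g t1)) = t2 - t1 := by rw [hgeq]; ring
  clear_value t1 t2
  linarith [hsup, hinf, hdiff, hfin]
end

section
/- Let J ≥ 1 be a natural number, m ∈ ℝ, Δ > 0, s₀ ∈ ℝ, and define equally spaced AP direction parameters s : Fin J → ℝ by s j = s₀ + j·(Δ/J). For an assignment g : ℝ → Fin J let D(g) = {t − s(g t) : t ∈ [m, m + Δ]}. Then the infimum over all assignments g : ℝ → Fin J of the angular deviation sSup D(g) − sInf D(g) equals Δ/J. -/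
/-!
Write `D` for the set of deviations `t - s (g t)`, `t ∈ [m, m + Δ]`, of an assignment `g`, and
`L = sup D - inf D`. Every `t` lies in `[inf D, sup D] + s (g t)`, so `[m, m + Δ]` is covered by
`J` translates of an interval of length `L`; comparing lengths gives `Δ ≤ J L`. Conversely,
sending `t` to the subarea `⌊(t - m) / (Δ / J)⌋` (the last one at the right endpoint) keeps all
deviations in an interval of length `Δ / J`.
-/

open Set MeasureTheory

variable {ι : Type*}

def deviationSet (s : ι → ℝ) (g : ℝ → ι) (I : Set ℝ) : Set ℝ :=
  {x | ∃ t ∈ I, x = t - s (g t)}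

noncomputable def angularDeviation (s : ι → ℝ) (g : ℝ → ι) (I : Set ℝ) : ℝ :=
  sSup (deviationSet s g I) - sInf (deviationSet s g I)

section Deviation

variable (s : ι → ℝ) (g : ℝ → ι) {I : Set ℝ}

lemma bddAbove_deviationSet [Finite ι] (hI : BddAbove I) : BddAbove (deviationSet s g I) := by
  obtain ⟨a, ha⟩ := hI
  obtain ⟨b, hb⟩ := (finite_range s).bddBelow
  refine ⟨a - b, ?_⟩
  rintro x ⟨t, ht, rfl⟩
  exact sub_le_sub (ha ht) (hb (mem_range_self _))

lemma bddBelow_deviationSet [Finite ι] (hI : BddBelow I) : BddBelow (deviationSet s g I) := by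
  obtain ⟨a, ha⟩ := hI
  obtain ⟨b, hb⟩ := (finite_range s).bddAbove
  refine ⟨a - b, ?_⟩
  rintro x ⟨t, ht, rfl⟩
  exact sub_le_sub (ha ht) (hb (mem_range_self _))

lemma subset_iUnion_Icc_deviationSet [Finite ι] (hI : Bornology.IsBounded I) :
    I ⊆ ⋃ i, Icc (sInf (deviationSet s g I) + s i) (sSup (deviationSet s g I) + s i) := by
  intro t ht
  have hx : t - s (g t) ∈ deviationSet s g I := ⟨t, ht, rfl⟩
  have hinf := csInf_le (bddBelow_deviationSet s g hI.bddBelow) hx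
  have hsup := le_csSup (bddAbove_deviationSet s g hI.bddAbove) hx
  exact mem_iUnion.2 ⟨g t, by linarith, by linarith⟩

lemma angularDeviation_le_of_subset_Icc (hI : I.Nonempty) {a c : ℝ}
    (h : deviationSet s g I ⊆ Icc a (a + c)) : angularDeviation s g I ≤ c := by
  obtain ⟨t, ht⟩ := hI
  have hne : (deviationSet s g I).Nonempty := ⟨_, t, ht, rfl⟩
  have hsup : sSup (deviationSet s g I) ≤ a + c := csSup_le hne fun x hx => (h hx).2
  have hinf : a ≤ sInf (deviationSet s g I) := le_csInf hne fun x hx => (h hx).1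
  unfold angularDeviation
  linarith

end Deviation

lemma sub_le_card_mul_of_Icc_subset_iUnion_Icc [Fintype ι] {m M a b : ℝ} (s : ι → ℝ)
    (hmM : m < M) (h : Icc m M ⊆ ⋃ i, Icc (a + s i) (b + s i)) :
    M - m ≤ Fintype.card ι * (b - a) := by
  have hvol : ENNReal.ofReal (M - m) ≤ ENNReal.ofReal (Fintype.card ι * (b - a)) :=
    calc ENNReal.ofReal (M - m) = volume (Icc m M) := (Real.volume_Icc).symm
      _ ≤ ∑ i, volume (Icc (a + s i) (b + s i)) :=
          (measure_mono h).trans (measure_iUnion_fintype_le _ _)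
      _ = ENNReal.ofReal (Fintype.card ι * (b - a)) := by
          simp only [Real.volume_Icc, add_sub_add_right_eq_sub, Finset.sum_const,
            Finset.card_univ, nsmul_eq_mul]
          rw [ENNReal.ofReal_mul (Nat.cast_nonneg _), ENNReal.ofReal_natCast]
  exact ((ENNReal.ofReal_le_ofReal_iff').1 hvol).resolve_right (by linarith)

lemma sub_le_card_mul_angularDeviation [Fintype ι] (s : ι → ℝ) (g : ℝ → ι) {m M : ℝ}
    (hmM : m < M) : M - m ≤ Fintype.card ι * angularDeviation s g (Icc m M) :=
  sub_le_card_mul_of_Icc_subset_iUnion_Icc s hmM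
    (subset_iUnion_Icc_deviationSet s g (Metric.isBounded_Icc m M))

lemma exists_lt_mem_Icc_mul {J : ℕ} (hJ : 1 ≤ J) {c x : ℝ} (hc : 0 < c) (hx : x ∈ Icc 0 (J * c)) :
    ∃ n < J, x ∈ Icc (n * c) (n * c + c) := by
  rcases hx.2.lt_or_eq with hlt | rfl
  · refine ⟨⌊x / c⌋₊, (Nat.floor_lt (div_nonneg hx.1 hc.le)).2 ((div_lt_iff₀ hc).2 hlt), ?_, ?_⟩
    · exact (le_div_iff₀ hc).1 (Nat.floor_le (div_nonneg hx.1 hc.le))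
    · have := (div_lt_iff₀ hc).1 (Nat.lt_floor_add_one (x / c))
      linarith
  · refine ⟨J - 1, by omega, ?_⟩
    rw [Nat.cast_sub hJ, Nat.cast_one]
    constructor <;> linarith

lemma exists_deviationSet_subset_Icc {J : ℕ} (hJ : 1 ≤ J) (m s₀ c : ℝ) (hc : 0 < c)
    (s : Fin J → ℝ) (hs : ∀ j : Fin J, s j = s₀ + j * c) :
    ∃ g : ℝ → Fin J, deviationSet s g (Icc m (m + J * c)) ⊆ Icc (m - s₀) (m - s₀ + c) := by
  have : ∀ t, ∃ j : Fin J, t ∈ Icc m (m + J * c) → t - s j ∈ Icc (m - s₀) (m - s₀ + c) := by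
    intro t
    by_cases ht : t ∈ Icc m (m + J * c)
    · obtain ⟨n, hn, hnt⟩ :=
        exists_lt_mem_Icc_mul hJ hc (x := t - m) ⟨by linarith [ht.1], by linarith [ht.2]⟩
      refine ⟨⟨n, hn⟩, fun _ => ?_⟩
      rw [hs]
      constructor <;> linarith [hnt.1, hnt.2]
    · exact ⟨⟨0, hJ⟩, fun h => absurd h ht⟩
  choose g hg using this
  exact ⟨g, by rintro x ⟨t, ht, rfl⟩; exact hg t ht⟩

/-- Proposition 3: with `J` equally spaced AP directions at spacing `Δ / J`,
the optimal achievable angular deviation is exactly `Δ / J`. -/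
theorem stmt_4 (J : ℕ) (hJ : 1 ≤ J) (m Δ s₀ : ℝ) (hΔ : 0 < Δ)
    (s : Fin J → ℝ) (hs : ∀ j : Fin J, s j = s₀ + (j : ℝ) * (Δ / J)) :
    (⨅ g : ℝ → Fin J,
      (sSup {x : ℝ | ∃ t ∈ Set.Icc m (m + Δ), x = t - s (g t)} -
        sInf {x : ℝ | ∃ t ∈ Set.Icc m (m + Δ), x = t - s (g t)})) = Δ / J := by
  change ⨅ g, angularDeviation s g (Icc m (m + Δ)) = Δ / J
  have hJpos : (0 : ℝ) < J := by exact_mod_cast hJ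
  have hlower (g : ℝ → Fin J) : Δ / J ≤ angularDeviation s g (Icc m (m + Δ)) := by
    have := sub_le_card_mul_angularDeviation s g (lt_add_of_pos_right m hΔ)
    rw [Fintype.card_fin, add_sub_cancel_left] at this
    exact (div_le_iff₀' hJpos).2 this
  have hΔJ : m + Δ = m + J * (Δ / J) := by field_simp
  obtain ⟨g₀, hg₀⟩ := exists_deviationSet_subset_Icc hJ m s₀ (Δ / J) (div_pos hΔ hJpos) s hs
  rw [← hΔJ] at hg₀
  have hupper := angularDeviation_le_of_subset_Icc s g₀ (nonempty_Icc.2 (by linarith)) hg₀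
  have : Nonempty (Fin J) := ⟨⟨0, hJ⟩⟩
  exact le_antisymm ((ciInf_le ⟨_, forall_mem_range.2 hlower⟩ g₀).trans hupper) (le_ciInf hlower)
end

section
/- Let N ≥ 1 be a natural number. The function t ↦ sin(N·t)/sin(t) is antitone on the interval (0, π/(2N)]: for all reals s, t with 0 < s ≤ t ≤ π/(2N), sin(N·t)/sin(t) ≤ sin(N·s)/sin(s). -/
open Real

lemma key_ineq (N : ℕ) : ∀ x : ℝ, 0 ≤ x → (N : ℝ) * x ≤ Real.pi / 2 →
    (N : ℝ) * Real.cos (N * x) * Real.sin x ≤ Real.sin (N * x) * Real.cos x := by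
  induction N with
  | zero => intro x hx _; simp
  | succ N ih =>
    intro x hx hNx
    have hxpi : x ≤ Real.pi / 2 := by
      have : x ≤ ((N : ℝ) + 1) * x := by nlinarith [Nat.cast_nonneg (α := ℝ) N]
      push_cast at hNx; linarith
    have hNx' : (N : ℝ) * x ≤ Real.pi / 2 := by
      push_cast at hNx; nlinarith
    have hIH := ih x hx hNx'
    have hsinA : 0 ≤ Real.sin ((N : ℝ) * x) := by
      apply Real.sin_nonneg_of_nonneg_of_le_pi (by positivity)
      linarith [Real.pi_pos]
    have hsinx : 0 ≤ Real.sin x := by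
      apply Real.sin_nonneg_of_nonneg_of_le_pi hx
      linarith [Real.pi_pos]
    have hcosx1 : Real.cos x ≤ 1 := Real.cos_le_one x
    have hcosx0 : 0 ≤ Real.cos x :=
      Real.cos_nonneg_of_mem_Icc ⟨by linarith [Real.pi_pos], hxpi⟩
    have hpyth : Real.sin x ^ 2 + Real.cos x ^ 2 = 1 := Real.sin_sq_add_cos_sq x
    have hadds : Real.sin (((N : ℝ) + 1) * x)
        = Real.sin ((N : ℝ) * x) * Real.cos x + Real.cos ((N : ℝ) * x) * Real.sin x := by
      rw [show ((N : ℝ) + 1) * x = (N : ℝ) * x + x by ring, Real.sin_add]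
    have haddc : Real.cos (((N : ℝ) + 1) * x)
        = Real.cos ((N : ℝ) * x) * Real.cos x - Real.sin ((N : ℝ) * x) * Real.sin x := by
      rw [show ((N : ℝ) + 1) * x = (N : ℝ) * x + x by ring, Real.cos_add]
    push_cast
    rw [hadds, haddc]
    nlinarith [mul_le_mul_of_nonneg_right hIH hcosx0,
      mul_nonneg (mul_nonneg (Nat.cast_nonneg (α := ℝ) N) hsinA) (sq_nonneg (Real.sin x)),
      mul_nonneg hsinA (sq_nonneg (Real.sin x))]

/-- Monotonicity of the Dirichlet-type kernel ratio: `sin (N t) / sin t` is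
antitone on `(0, π / (2 N)]`. -/
theorem stmt_6 (N : ℕ) (hN : 1 ≤ N) (s t : ℝ)
    (hs : 0 < s) (hst : s ≤ t) (ht : t ≤ Real.pi / (2 * N)) :
    Real.sin (N * t) / Real.sin t ≤ Real.sin (N * s) / Real.sin s := by
  have hN1 : (1 : ℝ) ≤ (N : ℝ) := by exact_mod_cast hN
  have hNpos : (0 : ℝ) < N := by linarith
  have hT2 : Real.pi / (2 * N) ≤ Real.pi / 2 := by
    apply div_le_div_of_nonneg_left Real.pi_pos.le (by norm_num) (by linarith)
  have hsinpos : ∀ x ∈ Set.Icc s t, 0 < Real.sin x := by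
    intro x hx
    apply Real.sin_pos_of_pos_of_lt_pi (lt_of_lt_of_le hs hx.1)
    have : x ≤ Real.pi / 2 := le_trans hx.2 (le_trans ht hT2)
    linarith [Real.pi_pos]
  have hd : ∀ x ∈ Set.Ioo s t, HasDerivAt (fun x => Real.sin (N * x) / Real.sin x)
      (((N : ℝ) * Real.cos (N * x) * Real.sin x - Real.sin (N * x) * Real.cos x)
        / (Real.sin x) ^ 2) x := by
    intro x hx
    have hsx := hsinpos x ⟨hx.1.le, hx.2.le⟩
    have h1 : HasDerivAt (fun x : ℝ => Real.sin ((N : ℝ) * x))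
        ((N : ℝ) * Real.cos ((N : ℝ) * x)) x := by
      simpa [Function.comp_def, mul_comm] using
        (Real.hasDerivAt_sin ((N : ℝ) * x)).comp x ((hasDerivAt_id x).const_mul (N : ℝ))
    exact h1.div (Real.hasDerivAt_sin x) hsx.ne'
  have hanti : AntitoneOn (fun x => Real.sin (N * x) / Real.sin x) (Set.Icc s t) := by
    apply antitoneOn_of_deriv_nonpos (convex_Icc s t)
    · apply ContinuousOn.div
      · exact (Real.continuous_sin.comp (continuous_const.mul continuous_id)).continuousOn
      · exact Real.continuous_sin.continuousOn
      · intro x hx; exact (hsinpos x hx).ne'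
    · intro x hx
      rw [interior_Icc] at hx
      exact (hd x hx).differentiableAt.differentiableWithinAt
    · intro x hx
      rw [interior_Icc] at hx
      have hsx := hsinpos x ⟨hx.1.le, hx.2.le⟩
      rw [(hd x hx).deriv]
      apply div_nonpos_of_nonpos_of_nonneg _ (by positivity)
      have hkey := key_ineq N x (lt_of_lt_of_le hs hx.1.le).le (by
        have hxt : x ≤ Real.pi / (2 * N) := le_trans hx.2.le ht
        rw [le_div_iff₀ (by positivity)] at hxt
        nlinarith)
      linarith
  exact hanti (Set.left_mem_Icc.mpr hst) (Set.right_mem_Icc.mpr hst) hst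
end

section
/- Let N ≥ 1 be a natural number and let x ∈ ℝ with |x| ≤ π/N. Then ‖∑_{n=0}^{N−1} exp(i·n·x)‖² ≥ 1 / (sin(π/(2N)))². -/
/-!
Multiplying the sum by the unimodular factor `exp (-i (N - 1) x / 2)` centres the exponents, so its
norm dominates the real part `∑ₙ cos ((n - (N - 1) / 2) x)`. Every frequency `n - (N - 1) / 2` has
modulus less than `N / 2`, so for `|x| ≤ π / N` each cosine is evaluated at a point of modulus at most
`π / 2` and is smallest at the beam edge `x = π / N`. There the real part telescopes
(`2 sin (x / 2) cos (k x) = sin ((k + 1/2) x) - sin ((k - 1/2) x)`) to `sin (π / 2) / sin (π / (2N))`.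
-/

open Real Finset

noncomputable def centeredCosSum (N : ℕ) (x : ℝ) : ℝ :=
  ∑ n : Fin N, cos (((n : ℝ) - ((N : ℝ) - 1) / 2) * x)

lemma centeredCosSum_mul_two_sin_half (N : ℕ) (x : ℝ) :
    centeredCosSum N x * (2 * sin (x / 2)) = 2 * sin (N * x / 2) := by
  have hterm : ∀ n : ℕ, cos (((n : ℝ) - ((N : ℝ) - 1) / 2) * x) * (2 * sin (x / 2)) =
      sin ((((n + 1 : ℕ) : ℝ) - N / 2) * x) - sin (((n : ℝ) - N / 2) * x) := by
    intro n
    rw [sin_sub_sin]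
    push_cast
    ring_nf
  rw [centeredCosSum, sum_mul, Fin.sum_univ_eq_sum_range
    (fun n : ℕ => cos (((n : ℝ) - ((N : ℝ) - 1) / 2) * x) * (2 * sin (x / 2))),
    sum_congr rfl fun n _ => hterm n, sum_range_sub (fun n : ℕ => sin (((n : ℝ) - N / 2) * x))]
  have hneg : ((((0 : ℕ) : ℝ) - N / 2) * x) = -(N * x / 2) := by push_cast; ring
  rw [hneg, sin_neg]
  ring_nf

lemma sin_pi_div_two_mul_pos {N : ℕ} (hN : N ≠ 0) : 0 < sin (π / (2 * N)) := by
  have hN1 : (1 : ℝ) ≤ N := by exact_mod_cast Nat.one_le_iff_ne_zero.mpr hN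
  refine sin_pos_of_pos_of_lt_pi (by positivity) ?_
  rw [div_lt_iff₀ (by positivity)]
  nlinarith [pi_pos]

lemma centeredCosSum_pi_div {N : ℕ} (hN : N ≠ 0) :
    centeredCosSum N (π / N) = 1 / sin (π / (2 * N)) := by
  have h := centeredCosSum_mul_two_sin_half N (π / N)
  rw [show π / N / 2 = π / (2 * N) by ring, mul_div_cancel₀ π (by positivity : (N : ℝ) ≠ 0),
    sin_pi_div_two] at h
  rw [eq_div_iff (sin_pi_div_two_mul_pos hN).ne']
  linarith

lemma Real.cos_le_cos_of_abs_le {x y : ℝ} (hxy : |x| ≤ |y|) (hy : |y| ≤ π) : cos y ≤ cos x := by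
  rw [← cos_abs x, ← cos_abs y]
  exact cos_le_cos_of_nonneg_of_le_pi (abs_nonneg x) hy hxy

lemma centeredCosSum_le_of_abs_le {N : ℕ} {x y : ℝ} (hxy : |x| ≤ y) (hy : (N - 1) * y ≤ 2 * π) :
    centeredCosSum N y ≤ centeredCosSum N x := by
  have hy0 : 0 ≤ y := (abs_nonneg x).trans hxy
  refine sum_le_sum fun n _ => cos_le_cos_of_abs_le ?_ ?_ <;>
    simp only [abs_mul, abs_of_nonneg hy0]
  · exact mul_le_mul_of_nonneg_left hxy (abs_nonneg _)
  · have hfreq : |(n : ℝ) - ((N : ℝ) - 1) / 2| ≤ ((N : ℝ) - 1) / 2 := by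
      have hn : (n : ℝ) + 1 ≤ N := by exact_mod_cast n.isLt
      rw [abs_le]
      constructor <;> linarith [(n : ℕ).cast_nonneg (α := ℝ)]
    nlinarith [abs_nonneg ((n : ℝ) - ((N : ℝ) - 1) / 2)]

lemma centeredCosSum_le_norm_sum_exp (N : ℕ) (x : ℝ) :
    centeredCosSum N x ≤ ‖∑ n : Fin N, Complex.exp (Complex.I * n * x)‖ := by
  set c : ℂ := Complex.exp (↑(-(((N : ℝ) - 1) / 2 * x)) * Complex.I)
  have hcentre : (c * ∑ n : Fin N, Complex.exp (Complex.I * n * x)).re = centeredCosSum N x := by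
    rw [mul_sum, Complex.re_sum]
    refine sum_congr rfl fun n _ => ?_
    rw [← Complex.exp_add, ← Complex.exp_ofReal_mul_I_re]
    congr 2
    push_cast
    ring
  calc centeredCosSum N x = (c * ∑ n : Fin N, Complex.exp (Complex.I * n * x)).re := hcentre.symm
    _ ≤ ‖c * ∑ n : Fin N, Complex.exp (Complex.I * n * x)‖ := Complex.re_le_norm _
    _ = ‖∑ n : Fin N, Complex.exp (Complex.I * n * x)‖ := by
      rw [norm_mul, Complex.norm_exp_ofReal_mul_I, one_mul]

/-- Key quantitative step of Theorem 1: over a beam of half-width `π / N`,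
the passive beamforming gain is at least `1 / sin² (π / (2 N))`. -/
theorem stmt_7 (N : ℕ) (hN : 1 ≤ N) (x : ℝ) (hx : |x| ≤ Real.pi / N) :
    1 / Real.sin (Real.pi / (2 * N)) ^ 2 ≤
      ‖∑ n : Fin N, Complex.exp (Complex.I * n * x)‖ ^ 2 := by
  have hN0 : N ≠ 0 := Nat.one_le_iff_ne_zero.mp hN
  have hedge : (N - 1) * (π / N) ≤ 2 * π := by
    rw [mul_div_assoc', div_le_iff₀ (by positivity)]
    nlinarith [pi_pos]
  have hpos : 0 ≤ centeredCosSum N (π / N) := by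
    rw [centeredCosSum_pi_div hN0]
    exact (one_div_pos.mpr (sin_pi_div_two_mul_pos hN0)).le
  rw [one_div, ← inv_pow, ← one_div, ← centeredCosSum_pi_div hN0]
  exact pow_le_pow_left₀ hpos ((centeredCosSum_le_of_abs_le hx hedge).trans
    (centeredCosSum_le_norm_sum_exp N x)) 2
end

section
/- Let N ≥ 1 be a natural number. The minimum of ‖∑_{n=0}^{N−1} exp(i·n·x)‖² over x ∈ [−π/N, π/N] is exactly 1/(sin(π/(2N)))²; that is, 1/(sin(π/(2N)))² is a lower bound for this quantity on [−π/N, π/N] and it is attained at x = π/N. -/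
/-!
Summing the geometric series gives `‖D_N(x)‖ · |sin (x/2)| = |sin (N x/2)|`, so for `x ≠ 0` and
`t = |x|/2 ∈ (0, π/(2N)]` the bound amounts to `sin t ≤ sin (π/(2N)) · sin (N t)`, an equality at
`t = π/(2N)`. The difference of the two sides vanishes at both ends of `[0, π/(2N)]` and is concave
there, because Jordan's inequality gives `N² sin (π/(2N)) ≥ N ≥ 1`; hence it is nonnegative.
At `x = 0` the sum equals `N`, and `N ≥ 1 / sin (π/(2N))` is Jordan's inequality again.
-/

open Real Complex Finset

noncomputable def dirichletSum (N : ℕ) (x : ℝ) : ℂ := ∑ n : Fin N, cexp (I * n * x)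

lemma dirichletSum_eq_sum_range (N : ℕ) (x : ℝ) :
    dirichletSum N x = ∑ n ∈ range N, cexp (I * x) ^ n := by
  rw [dirichletSum, Fin.sum_univ_eq_sum_range (fun n : ℕ => cexp (I * n * x))]
  refine sum_congr rfl fun n _ => ?_
  rw [← Complex.exp_nat_mul]
  ring_nf

lemma dirichletSum_zero_right (N : ℕ) : dirichletSum N 0 = N := by
  simp [dirichletSum]

lemma norm_dirichletSum_mul_abs_sin (N : ℕ) (x : ℝ) :
    ‖dirichletSum N x‖ * |Real.sin (x / 2)| = |Real.sin (N * x / 2)| := by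
  have h := congrArg norm (geom_sum_mul (cexp (I * x)) N)
  rw [← dirichletSum_eq_sum_range, norm_mul, norm_exp_I_mul_ofReal_sub_one, ← Complex.exp_nat_mul,
    show (N : ℂ) * (I * x) = I * ((N * x : ℝ) : ℂ) by push_cast; ring,
    norm_exp_I_mul_ofReal_sub_one] at h
  simp only [norm_mul, Real.norm_eq_abs, abs_two] at h
  linarith

lemma one_le_mul_sin_pi_div_two_mul {a : ℝ} (ha : 1 ≤ a) : 1 ≤ a * Real.sin (π / (2 * a)) := by
  have h := le_sin_mul (inv_nonneg.2 (zero_le_one.trans ha)) (inv_le_one_of_one_le₀ ha)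
  rw [show π / 2 * a⁻¹ = π / (2 * a) by field_simp] at h
  calc 1 = a * a⁻¹ := (mul_inv_cancel₀ (by positivity)).symm
    _ ≤ a * Real.sin (π / (2 * a)) := by gcongr

lemma concaveOn_mul_sin_mul_sub_sin {a c : ℝ} (ha : 1 ≤ a) (hc : 1 ≤ a ^ 2 * c) :
    ConcaveOn ℝ (Set.Icc 0 (π / (2 * a))) (fun t => c * Real.sin (a * t) - Real.sin t) := by
  have h' (t : ℝ) : HasDerivAt (fun t => c * Real.sin (a * t) - Real.sin t)
      (c * a * Real.cos (a * t) - Real.cos t) t :=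
    ((((hasDerivAt_id t).const_mul a).sin.const_mul c).sub (hasDerivAt_sin t)).congr_deriv
      (by simp only [id, mul_one]; ring)
  have h'' (t : ℝ) : HasDerivAt (fun t => c * a * Real.cos (a * t) - Real.cos t)
      (Real.sin t - c * a ^ 2 * Real.sin (a * t)) t :=
    ((((hasDerivAt_id t).const_mul a).cos.const_mul (c * a)).sub
      (hasDerivAt_cos t)).congr_deriv (by simp only [id, mul_one]; ring)
  refine concaveOn_of_hasDerivWithinAt2_nonpos (convex_Icc _ _) (by fun_prop)
    (fun t _ => (h' t).hasDerivWithinAt) (fun t _ => (h'' t).hasDerivWithinAt) ?_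
  rintro t ht
  rw [interior_Icc] at ht
  obtain ⟨ht0, hta⟩ := ht
  have hat : a * t < π / 2 := by
    rw [lt_div_iff₀ (by positivity)] at hta
    nlinarith
  have hsin_le : Real.sin t ≤ Real.sin (a * t) :=
    sin_le_sin_of_le_of_le_pi_div_two (by linarith [pi_pos]) hat.le (by nlinarith)
  have hsin_nonneg : 0 ≤ Real.sin (a * t) :=
    sin_nonneg_of_nonneg_of_le_pi (by positivity) (by linarith [pi_pos])
  nlinarith

lemma sin_le_sin_pi_div_two_mul_mul_sin_mul {a t : ℝ} (ha : 1 ≤ a) (ht0 : 0 ≤ t)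
    (hta : t ≤ π / (2 * a)) : Real.sin t ≤ Real.sin (π / (2 * a)) * Real.sin (a * t) := by
  have ha0 : 0 < a := zero_lt_one.trans_le ha
  have hc : 1 ≤ a ^ 2 * Real.sin (π / (2 * a)) := by
    nlinarith [one_le_mul_sin_pi_div_two_mul ha]
  have hT : a * (π / (2 * a)) = π / 2 := by field_simp
  have h := (concaveOn_mul_sin_mul_sub_sin ha hc).min_le_of_mem_Icc
    (Set.left_mem_Icc.2 (by positivity)) (Set.right_mem_Icc.2 (by positivity)) ⟨ht0, hta⟩
  simp only [mul_zero, Real.sin_zero, hT, Real.sin_pi_div_two, mul_one, sub_self, min_self] at h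
  linarith

lemma one_le_sin_mul_norm_dirichletSum {N : ℕ} (hN : 1 ≤ N) {x : ℝ} (hx : |x| ≤ π / N) :
    1 ≤ Real.sin (π / (2 * N)) * ‖dirichletSum N x‖ := by
  have hN' : (1 : ℝ) ≤ N := by exact_mod_cast hN
  rcases eq_or_ne x 0 with rfl | hx0
  · rw [dirichletSum_zero_right, Complex.norm_natCast, mul_comm]
    exact one_le_mul_sin_pi_div_two_mul hN'
  have hNpos : (0 : ℝ) < N := by positivity
  have hxN : N * |x| ≤ π := by rwa [le_div_iff₀ hNpos, mul_comm] at hx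
  have hπN : π / N ≤ π := div_le_self pi_pos.le hN'
  have ht : 0 < |x| / 2 := by positivity
  have htT : |x| / 2 ≤ π / (2 * N) := by
    rw [div_le_div_iff₀ two_pos (by positivity)]; linarith
  have hsin_t : |Real.sin (x / 2)| = Real.sin (|x| / 2) := by
    have h := abs_sin_eq_sin_abs_of_abs_le_pi (x := x / 2) (by rw [abs_div, abs_two]; linarith)
    rwa [abs_div, abs_two] at h
  have hsin_Nt : |Real.sin (N * x / 2)| = Real.sin (N * (|x| / 2)) := by
    have h := abs_sin_eq_sin_abs_of_abs_le_pi (x := N * x / 2)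
      (by rw [abs_div, abs_mul, Nat.abs_cast, abs_two]; linarith [pi_pos])
    rw [abs_div, abs_mul, Nat.abs_cast, abs_two] at h
    rw [h, mul_div_assoc]
  have hpos : 0 < Real.sin (|x| / 2) := sin_pos_of_pos_of_lt_pi ht (by linarith)
  have h := sin_le_sin_pi_div_two_mul_mul_sin_mul hN' ht.le htT
  rw [← hsin_Nt, ← norm_dirichletSum_mul_abs_sin, hsin_t, ← mul_assoc] at h
  exact le_of_mul_le_mul_right (by linarith) hpos

lemma norm_dirichletSum_pi_div {N : ℕ} (hN : 1 ≤ N) :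
    ‖dirichletSum N (π / N)‖ = 1 / |Real.sin (π / (2 * N))| := by
  have hN0 : (N : ℝ) ≠ 0 := by positivity
  have h := norm_dirichletSum_mul_abs_sin N (π / N)
  rw [show (N : ℝ) * (π / N) / 2 = π / 2 by field_simp, Real.sin_pi_div_two, abs_one,
    show π / N / 2 = π / (2 * N) by ring] at h
  exact eq_one_div_of_mul_eq_one_left h

/-- The exact worst-case passive beamforming gain of Theorem 1: the minimum of
the gain over `[-π/N, π/N]` is exactly `1 / sin² (π / (2N))`, attained at
`x = π / N`. -/
theorem stmt_8 (N : ℕ) (hN : 1 ≤ N) :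
    (∀ x ∈ Set.Icc (-(Real.pi / N)) (Real.pi / N),
      1 / Real.sin (Real.pi / (2 * N)) ^ 2 ≤
        ‖∑ n : Fin N, Complex.exp (Complex.I * n * x)‖ ^ 2) ∧
    ‖∑ n : Fin N, Complex.exp (Complex.I * n * (Real.pi / N : ℝ))‖ ^ 2 =
      1 / Real.sin (Real.pi / (2 * N)) ^ 2 := by
  have hN' : (1 : ℝ) ≤ N := by exact_mod_cast hN
  have hs : 0 < Real.sin (π / (2 * N)) :=
    pos_of_mul_pos_right (one_pos.trans_le (one_le_mul_sin_pi_div_two_mul hN')) (by linarith)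
  refine ⟨fun x hx => ?_, ?_⟩
  · have h := one_le_sin_mul_norm_dirichletSum hN (abs_le.2 hx)
    rw [div_le_iff₀ (pow_pos hs 2), ← mul_pow, mul_comm]
    exact one_le_pow₀ h
  · change ‖dirichletSum N (π / N)‖ ^ 2 = _
    rw [norm_dirichletSum_pi_div hN, div_pow, sq_abs, one_pow]
end

section
/- Let (Ω, μ) be a probability space, N, M ≥ 1 natural numbers, and ε, δ ≥ 0 reals. Let h̄ : Fin N → ℂ with ‖h̄ n‖ = 1 for all n, let a : Fin N → ℂ and b : Fin M → ℂ with ‖a n‖ = 1 and ‖b m‖ = 1 for all n, m, and let θ : Fin N → ℝ define Θ = diag(e^{iθ_1}, …, e^{iθ_N}). Let h̃ : Ω → (Fin N → ℂ) and G̃ : Ω → Matrix (Fin N) (Fin M) ℂ be random, independent of each other (IndepFun), with all entries and entry products integrable, zero mean (∫ h̃(ω) n dμ = 0, ∫ G̃(ω) n m dμ = 0), and second moments ∫ h̃(ω) n · conj(h̃(ω) n') dμ = δ_{nn'} and ∫ G̃(ω) n m · conj(G̃(ω) n' m') dμ = δ_{(n,m),(n',m')}, and additionally ∫ h̃(ω)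 n · h̃(ω) n' dμ = 0 for n ≠ n' and ∫ G̃(ω) n m · G̃(ω) n' m' dμ = 0 for (n,m) ≠ (n',m'). Define the Rician channels h(ω) = √(ε/(ε+1))·h̄ + √(1/(ε+1))·h̃(ω) and G(ω) = √(δ/(δ+1))·(a bᴴ) + √(1/(δ+1))·G̃(ω). Then ∫ ∑_{m} ‖∑_{n} conj(h(ω) n) · e^{iθ n} · (G(ω) n m)‖² dμ = γ₁ · ‖∑_{n} conj(h̄ n) · e^{iθ n} · a n‖² · M + γ₂ · M · N, where γ₁ = εδ/((ε+1)(δ+1)) and γ₂ = 1 − γ₁. -/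
/-!
Expanding `‖∑ₙ conj(hₙ) e^{iθₙ} Gₙₘ‖²` as a double sum over IRS elements, independence of `h̃` and
`G̃` factors the expectation of each term into a covariance entry of `h` times one of `G`.
Each Rician covariance is the rank-one line-of-sight part scaled by `K/(K+1)` plus the identity
scaled by `1/(K+1)`, and `|bₘ|² = 1` makes the covariance of `G` independent of `m`.
The rank-one parts recombine into `|h̄ᴴΘa|²`; the three diagonal cross terms contribute
`N` each, with total weight `1 - γ₁` since `(ε/(ε+1) + 1/(ε+1))(δ/(δ+1) + 1/(δ+1)) = 1`.
-/

open MeasureTheory ProbabilityTheory ComplexConjugate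

lemma Complex.ofReal_norm_sum_sq {ι : Type*} (s : Finset ι) (z : ι → ℂ) :
    (‖∑ i ∈ s, z i‖ : ℂ) ^ 2 = ∑ i ∈ s, ∑ j ∈ s, z i * conj (z j) := by
  rw [← Complex.mul_conj', map_sum, Finset.sum_mul_sum]

lemma Complex.mul_conj_of_norm_eq_one {z : ℂ} (hz : ‖z‖ = 1) : z * conj z = 1 := by
  rw [Complex.mul_conj', hz]
  norm_num

lemma sum_sum_mul_rankOne_add_diagonal {ι : Type*} [Fintype ι] [DecidableEq ι] {p q w : ι → ℂ}
    (hp : ∀ i, ‖p i‖ = 1) (hq : ∀ i, ‖q i‖ = 1) (hw : ∀ i, ‖w i‖ = 1) (α β γ η : ℂ) :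
    ∑ i, ∑ j, w i * conj (w j) * (α * (p j * conj (p i)) + β * if j = i then 1 else 0) *
        (γ * (q i * conj (q j)) + η * if i = j then 1 else 0) =
      α * γ * (‖∑ i, conj (p i) * w i * q i‖ : ℂ) ^ 2 +
        (α * η + β * γ + β * η) * Fintype.card ι := by
  have hterm : ∀ i j,
      w i * conj (w j) * (α * (p j * conj (p i)) + β * if j = i then 1 else 0) *
        (γ * (q i * conj (q j)) + η * if i = j then 1 else 0) =
      α * γ * (conj (p i) * w i * q i * conj (conj (p j) * w j * q j)) +
        if i = j then α * η + β * γ + β * η else 0 := by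
    intro i j
    rcases eq_or_ne i j with rfl | hij
    · simp only [if_true, map_mul, Complex.conj_conj]
      linear_combination (α * η * (p i * conj (p i)) + β * γ * (q i * conj (q i)) + β * η) *
        Complex.mul_conj_of_norm_eq_one (hw i) + α * η * Complex.mul_conj_of_norm_eq_one (hp i) +
        β * γ * Complex.mul_conj_of_norm_eq_one (hq i)
    · simp only [if_neg hij, if_neg hij.symm, map_mul, Complex.conj_conj]
      ring
  simp only [hterm, Finset.sum_add_distrib, ← Finset.mul_sum, Complex.ofReal_norm_sum_sq,
    Finset.sum_ite_eq, Finset.mem_univ, if_true, Finset.sum_const, Finset.card_univ,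
    nsmul_eq_mul]
  ring

section
variable {Ω : Type*} [MeasurableSpace Ω] {μ : Measure Ω}

lemma rician_mul_conj_rician (x y u v : ℂ) (c s : ℝ) :
    (c * x + s * u) * conj (c * y + s * v) =
      (c ^ 2 : ℝ) * (x * conj y) + (c * s * conj y) * u + (c * s * x) * conj v +
        (s ^ 2 : ℝ) * (u * conj v) := by
  simp only [map_add, map_mul, Complex.conj_ofReal]
  push_cast
  ring

lemma integral_sum_norm_sq_of_indepFun {ι κ : Type*} [Fintype ι] [Fintype κ]
    {h : Ω → ι → ℂ} {G : Ω → ι → κ → ℂ} (hhG : IndepFun h G μ)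
    (hh : ∀ i j, Integrable (fun ω => h ω j * conj (h ω i)) μ)
    (hG : ∀ i j k, Integrable (fun ω => G ω i k * conj (G ω j k)) μ) (w : ι → ℂ) :
    ((∫ ω, ∑ k, ‖∑ i, conj (h ω i) * w i * G ω i k‖ ^ 2 ∂μ : ℝ) : ℂ) =
      ∑ k, ∑ i, ∑ j, w i * conj (w j) * (∫ ω, h ω j * conj (h ω i) ∂μ) *
        ∫ ω, G ω i k * conj (G ω j k) ∂μ := by
  have hind : ∀ i j k, IndepFun (fun ω => h ω j * conj (h ω i))
      (fun ω => G ω i k * conj (G ω j k)) μ := fun i j k =>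
    hhG.comp (φ := fun v : ι → ℂ => v j * conj (v i))
      (ψ := fun v : ι → κ → ℂ => v i k * conj (v j k))
      (by fun_prop) (by fun_prop)
  have hterm : ∀ i j k, Integrable (fun ω => w i * conj (w j) *
      ((h ω j * conj (h ω i)) * (G ω i k * conj (G ω j k)))) μ := fun i j k =>
    ((hind i j k).integrable_mul (hh i j) (hG i j k)).const_mul _
  calc ((∫ ω, ∑ k, ‖∑ i, conj (h ω i) * w i * G ω i k‖ ^ 2 ∂μ : ℝ) : ℂ)
      = ∫ ω, ∑ k, ∑ i, ∑ j, w i * conj (w j) *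
          ((h ω j * conj (h ω i)) * (G ω i k * conj (G ω j k))) ∂μ := by
        rw [← integral_complex_ofReal]
        congr 1 with ω
        push_cast
        refine Finset.sum_congr rfl fun k _ => ?_
        rw [Complex.ofReal_norm_sum_sq]
        refine Finset.sum_congr rfl fun i _ => Finset.sum_congr rfl fun j _ => ?_
        simp only [map_mul, Complex.conj_conj]
        ring
    _ = _ := by
        rw [integral_finsetSum _ fun k _ => integrable_finsetSum _ fun i _ =>
          integrable_finsetSum _ fun j _ => hterm i j k]
        refine Finset.sum_congr rfl fun k _ => ?_
        rw [integral_finsetSum _ fun i _ => integrable_finsetSum _ fun j _ => hterm i j k]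
        refine Finset.sum_congr rfl fun i _ => ?_
        rw [integral_finsetSum _ fun j _ => hterm i j k]
        refine Finset.sum_congr rfl fun j _ => ?_
        rw [integral_const_mul, (hind i j k).integral_fun_mul_eq_mul_integral
          (hh i j).aestronglyMeasurable (hG i j k).aestronglyMeasurable]
        ring

variable [IsFiniteMeasure μ] {U V : Ω → ℂ}

lemma integrable_rician_mul_conj_rician (hU : Integrable U μ) (hV : Integrable V μ)
    (hUV : Integrable (fun ω => U ω * conj (V ω)) μ) (x y : ℂ) (c s : ℝ) :
    Integrable (fun ω => (c * x + s * U ω) * conj (c * y + s * V ω)) μ := by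
  simp only [rician_mul_conj_rician]
  exact (((integrable_const _).add (hU.const_mul _)).add
    ((RCLike.conjLIE.integrable_comp_iff.mpr hV).const_mul _)).add (hUV.const_mul _)

lemma integral_rician_mul_conj_rician [IsProbabilityMeasure μ] (hU : Integrable U μ)
    (hV : Integrable V μ) (hUV : Integrable (fun ω => U ω * conj (V ω)) μ)
    (hU₀ : ∫ ω, U ω ∂μ = 0) (hV₀ : ∫ ω, V ω ∂μ = 0) (x y : ℂ) (c s : ℝ) :
    ∫ ω, (c * x + s * U ω) * conj (c * y + s * V ω) ∂μ =
      (c ^ 2 : ℝ) * (x * conj y) + (s ^ 2 : ℝ) * ∫ ω, U ω * conj (V ω) ∂μ := by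
  have hV' : Integrable (fun ω => conj (V ω)) μ := RCLike.conjLIE.integrable_comp_iff.mpr hV
  have h₁ : Integrable (fun ω => (c ^ 2 : ℝ) * (x * conj y) + (c * s * conj y) * U ω) μ :=
    (integrable_const _).add (hU.const_mul _)
  have h₂ : Integrable (fun ω => (c ^ 2 : ℝ) * (x * conj y) + (c * s * conj y) * U ω +
      (c * s * x) * conj (V ω)) μ :=
    h₁.add (hV'.const_mul _)
  simp only [rician_mul_conj_rician]
  rw [integral_add h₂ (hUV.const_mul _), integral_add h₁ (hV'.const_mul _),
    integral_add (integrable_const _) (hU.const_mul _)]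
  simp [integral_const_mul, integral_conj, hU₀, hV₀]

lemma integral_rician_mul_conj_rician_of_factor [IsProbabilityMeasure μ] (hU : Integrable U μ)
    (hV : Integrable V μ) (hUV : Integrable (fun ω => U ω * conj (V ω)) μ)
    (hU₀ : ∫ ω, U ω ∂μ = 0) (hV₀ : ∫ ω, V ω ∂μ = 0) (x y : ℂ) {K : ℝ} (hK : 0 ≤ K) :
    ∫ ω, ((√(K / (K + 1)) : ℝ) * x + (√(1 / (K + 1)) : ℝ) * U ω) *
        conj ((√(K / (K + 1)) : ℝ) * y + (√(1 / (K + 1)) : ℝ) * V ω) ∂μ =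
      (K / (K + 1) : ℝ) * (x * conj y) + (1 / (K + 1) : ℝ) * ∫ ω, U ω * conj (V ω) ∂μ := by
  rw [integral_rician_mul_conj_rician hU hV hUV hU₀ hV₀, Real.sq_sqrt (by positivity),
    Real.sq_sqrt (by positivity)]

end

theorem stmt_16_general {Ω : Type*} [MeasurableSpace Ω] (μ : Measure Ω)
    [IsProbabilityMeasure μ] (N M : ℕ)
    (ε δ : ℝ) (hε : 0 ≤ ε) (hδ : 0 ≤ δ)
    (hbar : Fin N → ℂ) (hhbar : ∀ n, ‖hbar n‖ = 1)
    (a : Fin N → ℂ) (ha : ∀ n, ‖a n‖ = 1)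
    (b : Fin M → ℂ) (hb : ∀ m, ‖b m‖ = 1)
    (θ : Fin N → ℝ)
    (htil : Ω → Fin N → ℂ) (Gtil : Ω → Fin N → Fin M → ℂ)
    (hindep : ProbabilityTheory.IndepFun htil Gtil μ)
    (hint_h : ∀ n, Integrable (fun ω => htil ω n) μ)
    (hint_G : ∀ n m, Integrable (fun ω => Gtil ω n m) μ)
    (hint_hh : ∀ n n',
      Integrable (fun ω => htil ω n * (starRingEnd ℂ) (htil ω n')) μ)
    (hint_GG : ∀ n m n' m',
      Integrable (fun ω => Gtil ω n m * (starRingEnd ℂ) (Gtil ω n' m')) μ)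
    (hmean_h : ∀ n, ∫ ω, htil ω n ∂μ = 0)
    (hmean_G : ∀ n m, ∫ ω, Gtil ω n m ∂μ = 0)
    (hcov_h : ∀ n n', ∫ ω, htil ω n * (starRingEnd ℂ) (htil ω n') ∂μ =
      if n = n' then 1 else 0)
    (hcov_G : ∀ n m n' m',
      ∫ ω, Gtil ω n m * (starRingEnd ℂ) (Gtil ω n' m') ∂μ =
        if (n, m) = (n', m') then 1 else 0)
    (h : Ω → Fin N → ℂ)
    (hdef : ∀ ω n, h ω n =
      (Real.sqrt (ε / (ε + 1)) : ℝ) * hbar n +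
        (Real.sqrt (1 / (ε + 1)) : ℝ) * htil ω n)
    (G : Ω → Fin N → Fin M → ℂ)
    (hGdef : ∀ ω n m, G ω n m =
      (Real.sqrt (δ / (δ + 1)) : ℝ) * (a n * (starRingEnd ℂ) (b m)) +
        (Real.sqrt (1 / (δ + 1)) : ℝ) * Gtil ω n m) :
    ∫ ω, ∑ m, ‖∑ n, (starRingEnd ℂ) (h ω n) *
        Complex.exp (Complex.I * θ n) * G ω n m‖ ^ 2 ∂μ =
      (ε * δ / ((ε + 1) * (δ + 1))) *
          ‖∑ n, (starRingEnd ℂ) (hbar n) *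
            Complex.exp (Complex.I * θ n) * a n‖ ^ 2 * M +
        (1 - ε * δ / ((ε + 1) * (δ + 1))) * M * N := by
  have hRh : ∀ n n', ∫ ω, h ω n' * conj (h ω n) ∂μ =
      (ε / (ε + 1) : ℝ) * (hbar n' * conj (hbar n)) +
        (1 / (ε + 1) : ℝ) * if n' = n then 1 else 0 := fun n n' => by
    simp only [hdef]
    rw [integral_rician_mul_conj_rician_of_factor (hint_h n') (hint_h n) (hint_hh n' n)
      (hmean_h n') (hmean_h n) _ _ hε, hcov_h]
  have hRG : ∀ n n' m, ∫ ω, G ω n m * conj (G ω n' m) ∂μ =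
      (δ / (δ + 1) : ℝ) * (a n * conj (a n')) +
        (1 / (δ + 1) : ℝ) * if n = n' then 1 else 0 := fun n n' m => by
    simp only [hGdef]
    rw [integral_rician_mul_conj_rician_of_factor (hint_G n m) (hint_G n' m) (hint_GG n m n' m)
      (hmean_G n m) (hmean_G n' m) _ _ hδ, hcov_G]
    simp only [Prod.mk.injEq, and_true, map_mul, Complex.conj_conj]
    linear_combination (δ / (δ + 1) : ℝ) * (a n * conj (a n')) *
      Complex.mul_conj_of_norm_eq_one (hb m)
  have hhG : ProbabilityTheory.IndepFun h G μ := by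
    rw [funext₂ hdef, funext₃ hGdef]
    exact hindep.comp
      (φ := fun v n => (√(ε / (ε + 1)) : ℝ) * hbar n + (√(1 / (ε + 1)) : ℝ) * v n)
      (ψ := fun v n m => (√(δ / (δ + 1)) : ℝ) * (a n * conj (b m)) + (√(1 / (δ + 1)) : ℝ) * v n m)
      (by fun_prop) (by fun_prop)
  have hint_Rh : ∀ n n', Integrable (fun ω => h ω n' * conj (h ω n)) μ := fun n n' => by
    simpa only [hdef] using
      integrable_rician_mul_conj_rician (hint_h n') (hint_h n) (hint_hh n' n) _ _ _ _
  have hint_RG : ∀ n n' m, Integrable (fun ω => G ω n m * conj (G ω n' m)) μ := fun n n' m => by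
    simpa only [hGdef] using
      integrable_rician_mul_conj_rician (hint_G n m) (hint_G n' m) (hint_GG n m n' m) _ _ _ _
  apply Complex.ofReal_injective
  rw [integral_sum_norm_sq_of_indepFun hhG hint_Rh hint_RG]
  simp only [hRh, hRG, sum_sum_mul_rankOne_add_diagonal hhbar ha
    (fun n => Complex.norm_exp_I_mul_ofReal (θ n)), Finset.sum_const, Finset.card_univ,
    Fintype.card_fin, nsmul_eq_mul]
  have hε₁ : (ε + 1 : ℂ) ≠ 0 := by norm_cast; positivity
  have hδ₁ : (δ + 1 : ℂ) ≠ 0 := by norm_cast; positivity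
  push_cast
  field_simp
  ring

/-- Proposition 1 of the paper (single-AP, single-subarea form): under Rician
fading, the expected received channel power `E[‖hᴴ Θ G‖²]` equals
`γ₁ |h̄ᴴ Θ a|² M + γ₂ M N` with `γ₁ = εδ/((ε+1)(δ+1))` and `γ₂ = 1 - γ₁`. -/
theorem stmt_16 {Ω : Type*} [MeasurableSpace Ω] (μ : Measure Ω)
    [IsProbabilityMeasure μ] (N M : ℕ) (hN : 1 ≤ N) (hM : 1 ≤ M)
    (ε δ : ℝ) (hε : 0 ≤ ε) (hδ : 0 ≤ δ)
    (hbar : Fin N → ℂ) (hhbar : ∀ n, ‖hbar n‖ = 1)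
    (a : Fin N → ℂ) (ha : ∀ n, ‖a n‖ = 1)
    (b : Fin M → ℂ) (hb : ∀ m, ‖b m‖ = 1)
    (θ : Fin N → ℝ)
    (htil : Ω → Fin N → ℂ) (Gtil : Ω → Fin N → Fin M → ℂ)
    (hindep : ProbabilityTheory.IndepFun htil Gtil μ)
    (hint_h : ∀ n, Integrable (fun ω => htil ω n) μ)
    (hint_G : ∀ n m, Integrable (fun ω => Gtil ω n m) μ)
    (hint_hh : ∀ n n',
      Integrable (fun ω => htil ω n * (starRingEnd ℂ) (htil ω n')) μ)
    (hint_hh' : ∀ n n', Integrable (fun ω => htil ω n * htil ω n') μ)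
    (hint_GG : ∀ n m n' m',
      Integrable (fun ω => Gtil ω n m * (starRingEnd ℂ) (Gtil ω n' m')) μ)
    (hint_GG' : ∀ n m n' m',
      Integrable (fun ω => Gtil ω n m * Gtil ω n' m') μ)
    (hmean_h : ∀ n, ∫ ω, htil ω n ∂μ = 0)
    (hmean_G : ∀ n m, ∫ ω, Gtil ω n m ∂μ = 0)
    (hcov_h : ∀ n n', ∫ ω, htil ω n * (starRingEnd ℂ) (htil ω n') ∂μ =
      if n = n' then 1 else 0)
    (hcov_G : ∀ n m n' m',
      ∫ ω, Gtil ω n m * (starRingEnd ℂ) (Gtil ω n' m') ∂μ =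
        if (n, m) = (n', m') then 1 else 0)
    (hpcov_h : ∀ n n', n ≠ n' → ∫ ω, htil ω n * htil ω n' ∂μ = 0)
    (hpcov_G : ∀ n m n' m', (n, m) ≠ (n', m') →
      ∫ ω, Gtil ω n m * Gtil ω n' m' ∂μ = 0)
    (h : Ω → Fin N → ℂ)
    (hdef : ∀ ω n, h ω n =
      (Real.sqrt (ε / (ε + 1)) : ℝ) * hbar n +
        (Real.sqrt (1 / (ε + 1)) : ℝ) * htil ω n)
    (G : Ω → Fin N → Fin M → ℂ)
    (hGdef : ∀ ω n m, G ω n m =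
      (Real.sqrt (δ / (δ + 1)) : ℝ) * (a n * (starRingEnd ℂ) (b m)) +
        (Real.sqrt (1 / (δ + 1)) : ℝ) * Gtil ω n m) :
    ∫ ω, ∑ m, ‖∑ n, (starRingEnd ℂ) (h ω n) *
        Complex.exp (Complex.I * θ n) * G ω n m‖ ^ 2 ∂μ =
      (ε * δ / ((ε + 1) * (δ + 1))) *
          ‖∑ n, (starRingEnd ℂ) (hbar n) *
            Complex.exp (Complex.I * θ n) * a n‖ ^ 2 * M +
        (1 - ε * δ / ((ε + 1) * (δ + 1))) * M * N :=
  stmt_16_general μ N M ε δ hε hδ hbar hhbar a ha b hb θ htil Gtil hindep hint_h hint_G hint_hh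
    hint_GG hmean_h hmean_G hcov_h hcov_G h hdef G hGdef
end
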